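/- arXiv:2512.06124 — 2 statements merged into one kernel-verified Lean document; each statement's English description precedes it below -/
import Mathlib

section
/- Let κ ∈ ℝ and let L0 : ℝ → ℝ be of class C¹, even, positive, and nondecreasing in |d|. For d ∈ ℝ with dκ ≥ 0, define Φ(d) = ∫₀^d g(ξ)/L1(ξ,κ)² dξ, where g(ξ) = ξ + (1+ξκ)L0(ξ)L0'(ξ) + (κ/2)L0(ξ)² and L1(ξ,κ)² = ξ² + L0(ξ)²(1+ξκ). Then Φ(d) ≥ 0, and Φ(d) = 0 if and only if d = 0. -/
/-!
Since `g = ½ (L1²)'`, the potential is `Φ(d) = ½ log (L1(d)² / L1(0)²)`, and `dκ ≥ 0` keeps `L1²`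
positive between `0` and `d`. Monotonicity and evenness of `L0` give `L0(0) ≤ L0(d)`, hence
`L1(d)² ≥ d² + L0(0)² > L0(0)² = L1(0)²` for `d ≠ 0`.
-/

open Real Set

noncomputable section

def lineOfSightSq (κ : ℝ) (L : ℝ → ℝ) (x : ℝ) : ℝ := x ^ 2 + L x ^ 2 * (1 + x * κ)

def halfDerivLineOfSightSq (κ : ℝ) (L : ℝ → ℝ) (x : ℝ) : ℝ :=
  x + (1 + x * κ) * L x * deriv L x + κ / 2 * L x ^ 2

end

lemma mul_nonneg_of_mem_uIcc_zero {d κ x : ℝ} (hdκ : 0 ≤ d * κ) (hx : x ∈ uIcc 0 d) :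
    0 ≤ x * κ := by
  rcases le_total 0 d with hd | hd
  · rw [uIcc_of_le hd] at hx
    rcases hd.eq_or_lt with rfl | hd
    · simp [le_antisymm hx.2 hx.1]
    · exact mul_nonneg hx.1 (nonneg_of_mul_nonneg_right hdκ hd)
  · rw [uIcc_of_ge hd] at hx
    rcases hd.eq_or_lt with rfl | hd
    · simp [le_antisymm hx.2 hx.1]
    · exact mul_nonneg_of_nonpos_of_nonpos hx.2 (nonpos_of_mul_nonneg_right hdκ hd)

lemma apply_zero_le_of_even_of_monotoneOn {L : ℝ → ℝ} (heven : ∀ x, L (-x) = L x)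
    (hmono : MonotoneOn L (Ici 0)) (d : ℝ) : L 0 ≤ L d := by
  have h : L |d| = L d := by
    rcases abs_choice d with h | h <;> rw [h]
    exact heven d
  rw [← h]
  exact hmono self_mem_Ici (abs_nonneg d) (abs_nonneg d)

section LineOfSight

variable {κ : ℝ} {L : ℝ → ℝ}

lemma lineOfSightSq_pos {x : ℝ} (hL : 0 < L x) (hxκ : 0 ≤ x * κ) :
    0 < lineOfSightSq κ L x := by
  unfold lineOfSightSq
  positivity

lemma lineOfSightSq_zero_lt {d : ℝ} (hd : d ≠ 0) (hdκ : 0 ≤ d * κ) (hL0 : 0 < L 0)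
    (hLd : L 0 ≤ L d) : lineOfSightSq κ L 0 < lineOfSightSq κ L d := by
  have hsq : L 0 ^ 2 ≤ L d ^ 2 := pow_le_pow_left₀ hL0.le hLd 2
  have hd2 : 0 < d ^ 2 := by positivity
  unfold lineOfSightSq
  nlinarith [mul_nonneg (sq_nonneg (L d)) hdκ]

lemma hasDerivAt_lineOfSightSq {x : ℝ} (hL : DifferentiableAt ℝ L x) :
    HasDerivAt (lineOfSightSq κ L) (2 * halfDerivLineOfSightSq κ L x) x := by
  have hlin : HasDerivAt (fun y => 1 + y * κ) κ x := by
    simpa using ((hasDerivAt_id x).mul_const κ).const_add 1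
  exact ((hasDerivAt_pow 2 x).fun_add ((hL.hasDerivAt.fun_pow 2).fun_mul hlin)).congr_deriv
    (by simp only [halfDerivLineOfSightSq]; ring)

lemma integral_halfDerivLineOfSightSq_div (hC1 : ContDiff ℝ 1 L) (hpos : ∀ x, 0 < L x)
    {d : ℝ} (hdκ : 0 ≤ d * κ) :
    ∫ ξ in (0 : ℝ)..d, halfDerivLineOfSightSq κ L ξ / lineOfSightSq κ L ξ =
      log (lineOfSightSq κ L d) / 2 - log (lineOfSightSq κ L 0) / 2 := by
  have hne : ∀ x ∈ uIcc 0 d, lineOfSightSq κ L x ≠ 0 := fun x hx =>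
    (lineOfSightSq_pos (hpos x) (mul_nonneg_of_mem_uIcc_zero hdκ hx)).ne'
  have hdiff : Differentiable ℝ L := hC1.differentiable one_ne_zero
  have hcont : Continuous (deriv L) := hC1.continuous_deriv le_rfl
  refine intervalIntegral.integral_eq_sub_of_hasDerivAt
    (f := fun x => log (lineOfSightSq κ L x) / 2) (fun x hx => ?_) ?_
  · exact (((hasDerivAt_lineOfSightSq (hdiff x)).log (hne x hx)).div_const 2).congr_deriv
      (by ring)
  · have hg : Continuous (halfDerivLineOfSightSq κ L) := by
      unfold halfDerivLineOfSightSq; fun_prop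
    have hL1 : Continuous (lineOfSightSq κ L) := by
      unfold lineOfSightSq; fun_prop
    exact (hg.continuousOn.div hL1.continuousOn hne).intervalIntegrable

end LineOfSight

/-- For a `C¹`, even, positive look-ahead profile `L0` nondecreasing in
`|d|`, the Lyapunov potential `Φ(d) = ∫₀^d g(ξ)/L1(ξ,κ)² dξ` is nonnegative on the set
`{d : dκ ≥ 0}`, vanishing exactly at `d = 0`. -/
theorem stmt_8 (κ : ℝ) (L0 : ℝ → ℝ) (hC1 : ContDiff ℝ 1 L0)
    (heven : ∀ x, L0 (-x) = L0 x) (hpos : ∀ x, 0 < L0 x)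
    (hmono : MonotoneOn L0 (Set.Ici (0 : ℝ)))
    (d : ℝ) (hdκ : d * κ ≥ 0) :
    let g : ℝ → ℝ := fun x => x + (1 + x * κ) * L0 x * deriv L0 x + κ / 2 * (L0 x) ^ 2
    let L1sq : ℝ → ℝ := fun x => x ^ 2 + (L0 x) ^ 2 * (1 + x * κ)
    let Φ : ℝ → ℝ := fun x => ∫ ξ in (0 : ℝ)..x, g ξ / L1sq ξ
    Φ d ≥ 0 ∧ (Φ d = 0 ↔ d = 0) := by
  intro g L1sq Φ
  rcases eq_or_ne d 0 with rfl | hd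
  · simp [Φ]
  have hΦ : Φ d = log (lineOfSightSq κ L0 d) / 2 - log (lineOfSightSq κ L0 0) / 2 :=
    integral_halfDerivLineOfSightSq_div hC1 hpos hdκ
  have hlog : log (lineOfSightSq κ L0 0) < log (lineOfSightSq κ L0 d) :=
    log_lt_log (lineOfSightSq_pos (hpos 0) (by simp))
      (lineOfSightSq_zero_lt hd hdκ (hpos 0) (apply_zero_le_of_even_of_monotoneOn heven hmono d))
  exact ⟨by linarith, iff_of_false (by linarith) hd⟩
end

section
/- (Positive definiteness of the Lyapunov function) Let V > 0, let κ ∈ ℝ, and let L0 : ℝ → ℝ be C¹, even, positive, and nondecreasing in |d|. For d with dκ ≥ 0, define Φ(d) = ∫₀^d g(ξ)/L1(ξ,κ)² dξ with g(ξ) = ξ + (1+ξκ)L0(ξ)L0'(ξ) + (κ/2)L0(ξ)² and L1(ξ,κ)² = ξ² + L0(ξ)²(1+ξκ), and define 𝒱(d,η) = (1/2)V² sin²η + V² Φ(d). Then 𝒱(d,η) ≥ 0 for all such d and all η ∈ ℝ, and for η ∈ (−π, π), 𝒱(d,η) = 0 if and only if d = 0 and η = 0. -/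
/-!
Along the line-of-sight the integrand is a logarithmic derivative, `g = (L1²)' / 2`, so
`Φ(d) = (log L1(d)² - log L0(0)²) / 2`. Evenness and monotonicity make `L0(0)` the minimum of
`L0`, and with `dκ ≥ 0` this gives `L1(d)² ≥ L0(0)² + d²`. Hence `Φ ≥ 0` with equality only at
`d = 0`, while `sin² η ≥ 0` vanishes on `(-π, π)` only at `η = 0`.
-/

open Set Real intervalIntegral

theorem integral_div_eq_log_sub_log {f f' : ℝ → ℝ} {a b : ℝ}
    (hf : ∀ x ∈ uIcc a b, HasDerivAt f (f' x) x) (hf' : ContinuousOn f' (uIcc a b))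
    (hne : ∀ x ∈ uIcc a b, f x ≠ 0) :
    ∫ x in a..b, f' x / f x = log (f b) - log (f a) := by
  have hcont : ContinuousOn f (uIcc a b) := fun x hx =>
    (hf x hx).continuousAt.continuousWithinAt
  exact integral_eq_sub_of_hasDerivAt (fun x hx => (hf x hx).log (hne x hx))
    (hf'.div hcont hne).intervalIntegrable

theorem mul_nonneg_of_mem_uIcc {d κ ξ : ℝ} (hd : 0 ≤ d * κ) (hξ : ξ ∈ uIcc 0 d) :
    0 ≤ ξ * κ := by
  obtain ⟨t, ht, rfl⟩ : ∃ t ∈ Icc (0 : ℝ) 1, t * d = ξ := by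
    obtain ⟨s, t, hs, ht, hst, rfl⟩ := (segment_eq_uIcc (𝕜 := ℝ) 0 d).symm ▸ hξ
    exact ⟨t, ⟨ht, by linarith⟩, by simp⟩
  rw [mul_assoc]
  exact mul_nonneg ht.1 hd

theorem le_of_even_of_monotoneOn {f : ℝ → ℝ} (heven : ∀ x, f (-x) = f x)
    (hmono : MonotoneOn f (Ici 0)) (x : ℝ) : f 0 ≤ f x := by
  rcases le_total 0 x with hx | hx
  · exact hmono self_mem_Ici hx hx
  · rw [← heven x]
    exact hmono self_mem_Ici (neg_nonneg.mpr hx) (neg_nonneg.mpr hx)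

section LineOfSight

variable (L0 : ℝ → ℝ) (κ : ℝ)

def losSq (x : ℝ) : ℝ := x ^ 2 + L0 x ^ 2 * (1 + x * κ)

noncomputable def halfDerivLosSq (x : ℝ) : ℝ :=
  x + (1 + x * κ) * L0 x * deriv L0 x + κ / 2 * L0 x ^ 2

noncomputable def losPotential (d : ℝ) : ℝ :=
  ∫ x in (0 : ℝ)..d, halfDerivLosSq L0 κ x / losSq L0 κ x

variable {L0 κ}

theorem hasDerivAt_losSq {x : ℝ} (hL0 : DifferentiableAt ℝ L0 x) :
    HasDerivAt (losSq L0 κ) (2 * halfDerivLosSq L0 κ x) x := by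
  refine ((hasDerivAt_pow 2 x).fun_add ((hL0.hasDerivAt.fun_pow 2).fun_mul
    (((hasDerivAt_id' x).mul_const κ).const_add 1))).congr_deriv ?_
  norm_num [halfDerivLosSq]
  ring

theorem sq_add_sq_le_losSq (hmin : ∀ x, L0 0 ≤ L0 x) (hpos : 0 ≤ L0 0) {x : ℝ}
    (hx : 0 ≤ x * κ) : L0 0 ^ 2 + x ^ 2 ≤ losSq L0 κ x := by
  have hsq : L0 0 ^ 2 ≤ L0 x ^ 2 := pow_le_pow_left₀ hpos (hmin x) 2
  unfold losSq
  nlinarith [sq_nonneg (L0 x)]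

theorem sq_le_losSq (hmin : ∀ x, L0 0 ≤ L0 x) (hpos : 0 ≤ L0 0) {x : ℝ} (hx : 0 ≤ x * κ) :
    L0 0 ^ 2 ≤ losSq L0 κ x :=
  (le_add_of_nonneg_right (sq_nonneg x)).trans (sq_add_sq_le_losSq hmin hpos hx)

theorem losPotential_eq (hC1 : ContDiff ℝ 1 L0) (hmin : ∀ x, L0 0 ≤ L0 x) (hpos : 0 < L0 0)
    {d : ℝ} (hd : 0 ≤ d * κ) :
    losPotential L0 κ d = (log (losSq L0 κ d) - log (L0 0 ^ 2)) / 2 := by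
  have hdiff : Differentiable ℝ L0 := hC1.differentiable one_ne_zero
  have hcont : Continuous (fun x => 2 * halfDerivLosSq L0 κ x) := by
    have := hC1.continuous_deriv le_rfl
    unfold halfDerivLosSq
    fun_prop
  have hne : ∀ x ∈ uIcc 0 d, losSq L0 κ x ≠ 0 := fun x hx =>
    ((pow_pos hpos 2).trans_le (sq_le_losSq hmin hpos.le (mul_nonneg_of_mem_uIcc hd hx))).ne'
  have h := integral_div_eq_log_sub_log (fun x _ => hasDerivAt_losSq (κ := κ) (hdiff x))
    hcont.continuousOn hne
  have hlos0 : losSq L0 κ 0 = L0 0 ^ 2 := by simp [losSq]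
  rw [hlos0] at h
  rw [losPotential, ← h]
  simp only [mul_div_assoc, integral_const_mul]
  ring

theorem losPotential_nonneg (hC1 : ContDiff ℝ 1 L0) (hmin : ∀ x, L0 0 ≤ L0 x)
    (hpos : 0 < L0 0) {d : ℝ} (hd : 0 ≤ d * κ) : 0 ≤ losPotential L0 κ d := by
  rw [losPotential_eq hC1 hmin hpos hd]
  linarith [log_le_log (pow_pos hpos 2) (sq_le_losSq hmin hpos.le hd)]

theorem losPotential_eq_zero_iff (hC1 : ContDiff ℝ 1 L0) (hmin : ∀ x, L0 0 ≤ L0 x)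
    (hpos : 0 < L0 0) {d : ℝ} (hd : 0 ≤ d * κ) : losPotential L0 κ d = 0 ↔ d = 0 := by
  refine ⟨fun h => ?_, fun h => by simp [h, losPotential]⟩
  rw [losPotential_eq hC1 hmin hpos hd, div_eq_zero_iff, sub_eq_zero] at h
  have hlos_eq : losSq L0 κ d = L0 0 ^ 2 :=
    log_injOn_pos ((pow_pos hpos 2).trans_le (sq_le_losSq hmin hpos.le hd)) (pow_pos hpos 2)
      (h.resolve_right two_ne_zero)
  have hd2 : d ^ 2 = 0 :=
    le_antisymm (by linarith [sq_add_sq_le_losSq hmin hpos.le hd]) (sq_nonneg d)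
  exact pow_eq_zero_iff two_ne_zero |>.mp hd2

end LineOfSight

/-- **Positive definiteness of the Lyapunov function.** With
`Φ(d) = ∫₀^d g(ξ)/L1(ξ,κ)² dξ` and `𝒱(d,η) = (1/2)V² sin²η + V² Φ(d)`, one has
`𝒱(d,η) ≥ 0` for all `d` with `dκ ≥ 0` and all `η`, and for `η ∈ (−π,π)`,
`𝒱(d,η) = 0` iff `d = 0` and `η = 0`. -/
theorem stmt_9 (V κ : ℝ) (hV : 0 < V) (L0 : ℝ → ℝ) (hC1 : ContDiff ℝ 1 L0)
    (heven : ∀ x, L0 (-x) = L0 x) (hpos : ∀ x, 0 < L0 x)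
    (hmono : MonotoneOn L0 (Set.Ici (0 : ℝ))) :
    let g : ℝ → ℝ := fun x => x + (1 + x * κ) * L0 x * deriv L0 x + κ / 2 * (L0 x) ^ 2
    let L1sq : ℝ → ℝ := fun x => x ^ 2 + (L0 x) ^ 2 * (1 + x * κ)
    let Φ : ℝ → ℝ := fun x => ∫ ξ in (0 : ℝ)..x, g ξ / L1sq ξ
    let 𝒱 : ℝ → ℝ → ℝ := fun d η => (1 / 2) * V ^ 2 * (Real.sin η) ^ 2 + V ^ 2 * Φ d
    (∀ d : ℝ, d * κ ≥ 0 → ∀ η : ℝ, 𝒱 d η ≥ 0) ∧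
      (∀ d : ℝ, d * κ ≥ 0 → ∀ η : ℝ, η ∈ Set.Ioo (-Real.pi) Real.pi →
        (𝒱 d η = 0 ↔ d = 0 ∧ η = 0)) := by
  intro g L1sq Φ 𝒱
  have hmin := le_of_even_of_monotoneOn heven hmono
  have hterms : ∀ d, 0 ≤ d * κ → ∀ η, 0 ≤ 1 / 2 * V ^ 2 * sin η ^ 2 ∧ 0 ≤ V ^ 2 * Φ d :=
    fun d hd η =>
      ⟨by positivity, mul_nonneg (sq_nonneg V) (losPotential_nonneg hC1 hmin (hpos 0) hd)⟩
  refine ⟨fun d hd η => add_nonneg (hterms d hd η).1 (hterms d hd η).2,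
    fun d hd η hη => ⟨fun h => ?_, ?_⟩⟩
  · obtain ⟨hsin, hΦ⟩ := (add_eq_zero_iff_of_nonneg (hterms d hd η).1 (hterms d hd η).2).mp h
    replace hΦ : Φ d = 0 := by simpa [hV.ne'] using hΦ
    replace hsin : sin η = 0 := by simpa [hV.ne'] using hsin
    exact ⟨(losPotential_eq_zero_iff hC1 hmin (hpos 0) hd).mp hΦ,
      (sin_eq_zero_iff_of_lt_of_lt hη.1 hη.2).mp hsin⟩
  · rintro ⟨rfl, rfl⟩
    simp [𝒱, Φ]
end
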